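/- Let A be an m×d matrix with ‖A‖_op = 1, x* ∈ ℝ^d arbitrary, y = Ax* + e, and 0 ≤ η ≤ 1. Write H_s(x*) for a best s-term approximation of x* and ẽ = y − A H_s(x*). Let a ∈ ℝ^d, C(x) = ‖y − Ax‖₂², ℓ_η = a − η∇C(a), and let x' be the s-sparse coordinate projection of a closest to ℓ_η. Then ‖x' − H_s(x*)‖₂ ≤ (2 + 2η)‖a − H_s(x*)‖₂ + 6η‖ẽ‖₂. -/

import Mathlib

open Matrix MeasureTheory ProbabilityTheory Filter
open scoped RealInnerProductSpace NNReal

/-- Operator norm of a matrix with respect to Euclidean norms. -/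
noncomputable def opNorm {m d : ℕ} (A : Matrix (Fin m) (Fin d) ℝ) : ℝ :=
  ‖LinearMap.toContinuousLinearMap (Matrix.toEuclideanLin A)‖

/-- Matrix-vector multiplication as a map between Euclidean spaces. -/
noncomputable def Mv {m d : ℕ} (A : Matrix (Fin m) (Fin d) ℝ)
    (x : EuclideanSpace ℝ (Fin d)) : EuclideanSpace ℝ (Fin m) :=
  Matrix.toEuclideanLin A x

/-- A vector is `s`-sparse if it has at most `s` nonzero entries. -/
def Sparse {d : ℕ} (s : ℕ) (x : EuclideanSpace ℝ (Fin d)) : Prop :=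
  Set.ncard {i | x i ≠ 0} ≤ s

/-- Coordinate projection onto the index set `S`. -/
noncomputable def proj {d : ℕ} (S : Finset (Fin d)) (z : EuclideanSpace ℝ (Fin d)) :
    EuclideanSpace ℝ (Fin d) :=
  WithLp.toLp 2 (fun i => if i ∈ S then z i else 0)

/-!
With `ẽ = y - A h`, the gradient step is `ℓ = a + 2η Aᵀ (y - A a)`, so
`ℓ - h = (I - 2η AᵀA)(a - h) + 2η Aᵀ ẽ`. Since `‖A‖ ≤ 1` and `2η ≤ 2`, the operator
`I - 2η AᵀA` is a contraction, whence `‖ℓ - h‖ ≤ ‖a - h‖ + 2η ‖ẽ‖`; similarly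
`‖ℓ - a‖ ≤ 2η (‖a - h‖ + ‖ẽ‖)`. Projecting `a` onto an `s`-set containing the support of `h`
moves it by at most `‖a - h‖`, and `x'` is at least as close to `ℓ` as that projection, so the
triangle inequality through `ℓ` and `a` gives the bound (even with `4η` in place of `6η`).
-/

section GradientStep

open ContinuousLinearMap

variable {E F : Type*} [NormedAddCommGroup E] [InnerProductSpace ℝ E] [CompleteSpace E]
  [NormedAddCommGroup F] [InnerProductSpace ℝ F] [CompleteSpace F] {T : E →L[ℝ] F}

theorem norm_adjoint_apply_le (hT : ‖T‖ ≤ 1) (w : F) : ‖adjoint T w‖ ≤ ‖w‖ := by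
  have hT' : ‖adjoint T‖ ≤ 1 := by rwa [LinearIsometryEquiv.norm_map]
  simpa using (adjoint T).le_of_opNorm_le hT' w

/-- The square norm is `‖v‖² - 2c ‖Tv‖² + c² ‖T†Tv‖² ≤ ‖v‖² - c (2 - c) ‖Tv‖²`. -/
theorem norm_sub_smul_adjoint_apply_apply_le (hT : ‖T‖ ≤ 1) {c : ℝ} (hc0 : 0 ≤ c) (hc2 : c ≤ 2)
    (v : E) : ‖v - c • adjoint T (T v)‖ ≤ ‖v‖ := by
  have hinner : ⟪v, adjoint T (T v)⟫ = ‖T v‖ ^ 2 := by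
    rw [adjoint_inner_right, real_inner_self_eq_norm_sq]
  have hadj : ‖adjoint T (T v)‖ ≤ ‖T v‖ := norm_adjoint_apply_le hT (T v)
  have hsq : ‖v - c • adjoint T (T v)‖ ^ 2 ≤ ‖v‖ ^ 2 := by
    rw [norm_sub_sq_real, real_inner_smul_right, hinner, norm_smul, Real.norm_of_nonneg hc0]
    nlinarith [mul_le_mul hadj hadj (norm_nonneg _) (norm_nonneg _), sq_nonneg ‖T v‖,
      mul_nonneg hc0 (sub_nonneg.2 hc2)]
  exact (pow_le_pow_iff_left₀ (norm_nonneg _) (norm_nonneg _) two_ne_zero).1 hsq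

/-- A step of size `c / 2` along `-∇ ‖y - T x‖²`, since that gradient is `-2 T† (y - T x)`. -/
noncomputable def gradientStep (T : E →L[ℝ] F) (y : F) (c : ℝ) (a : E) : E :=
  a + c • adjoint T (y - T a)

variable {c : ℝ} {a h : E} {y : F}

theorem norm_gradientStep_sub_self_le (hT : ‖T‖ ≤ 1) (hc0 : 0 ≤ c) :
    ‖gradientStep T y c a - a‖ ≤ c * (‖a - h‖ + ‖y - T h‖) := by
  have hres : y - T a = (y - T h) - T (a - h) := by rw [map_sub]; abel
  calc ‖gradientStep T y c a - a‖ = c * ‖adjoint T (y - T a)‖ := by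
        rw [gradientStep, add_sub_cancel_left, norm_smul, Real.norm_of_nonneg hc0]
    _ ≤ c * ‖y - T a‖ := by gcongr; exact norm_adjoint_apply_le hT _
    _ ≤ c * (‖y - T h‖ + ‖T (a - h)‖) := by gcongr; rw [hres]; exact norm_sub_le _ _
    _ ≤ c * (‖y - T h‖ + 1 * ‖a - h‖) := by gcongr; exact T.le_of_opNorm_le hT _
    _ = c * (‖a - h‖ + ‖y - T h‖) := by ring

theorem norm_gradientStep_sub_le (hT : ‖T‖ ≤ 1) (hc0 : 0 ≤ c) (hc2 : c ≤ 2) :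
    ‖gradientStep T y c a - h‖ ≤ ‖a - h‖ + c * ‖y - T h‖ := by
  have hsplit : gradientStep T y c a - h =
      ((a - h) - c • adjoint T (T (a - h))) + c • adjoint T (y - T h) := by
    simp only [gradientStep, map_sub]
    module
  calc ‖gradientStep T y c a - h‖
        ≤ ‖(a - h) - c • adjoint T (T (a - h))‖ + ‖c • adjoint T (y - T h)‖ :=
        hsplit ▸ norm_add_le _ _
    _ = ‖(a - h) - c • adjoint T (T (a - h))‖ + c * ‖adjoint T (y - T h)‖ := by
        rw [norm_smul, Real.norm_of_nonneg hc0]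
    _ ≤ ‖a - h‖ + c * ‖y - T h‖ := by
        gcongr
        · exact norm_sub_smul_adjoint_apply_apply_le hT hc0 hc2 _
        · exact norm_adjoint_apply_le hT _

end GradientStep

section Sparse

variable {d : ℕ}

theorem norm_proj_sub_le_of_support_subset {S : Finset (Fin d)} {h : EuclideanSpace ℝ (Fin d)}
    (hS : ∀ i, h i ≠ 0 → i ∈ S) (a : EuclideanSpace ℝ (Fin d)) : ‖proj S a - a‖ ≤ ‖a - h‖ := by
  rw [EuclideanSpace.norm_eq, EuclideanSpace.norm_eq]
  gcongr with i
  by_cases hi : i ∈ S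
  · simp [proj, hi]
  · have hhi : h i = 0 := not_imp_comm.1 (hS i) hi
    simp [proj, hi, hhi]

theorem Sparse.exists_proj_sub_le {s : ℕ} {h : EuclideanSpace ℝ (Fin d)} (hh : Sparse s h)
    (hs : s ≤ d) (a : EuclideanSpace ℝ (Fin d)) :
    ∃ S : Finset (Fin d), S.card = s ∧ ‖proj S a - a‖ ≤ ‖a - h‖ := by
  classical
  have hsupp : (Finset.univ.filter fun i => h i ≠ 0).card ≤ s := by
    simpa [Sparse, ← Set.ncard_coe_finset] using hh
  obtain ⟨S, hsub, hS⟩ := Finset.exists_superset_card_eq hsupp (by simpa using hs)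
  exact ⟨S, hS, norm_proj_sub_le_of_support_subset (fun i hi => hsub (by simpa using hi)) a⟩

end Sparse

theorem Mv_transpose_eq_adjoint {m d : ℕ} (A : Matrix (Fin m) (Fin d) ℝ)
    (w : EuclideanSpace ℝ (Fin m)) :
    Mv Aᵀ w = ContinuousLinearMap.adjoint (toEuclideanLin A).toContinuousLinearMap w := by
  rw [Mv, ← conjTranspose_eq_transpose_of_trivial, toEuclideanLin_conjTranspose_eq_adjoint]
  rfl

theorem stmt9_general {m d s : ℕ} (A : Matrix (Fin m) (Fin d) ℝ) (hA : opNorm A = 1)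
    (y : EuclideanSpace ℝ (Fin m))
    (η : ℝ) (hη0 : 0 ≤ η) (hη1 : η ≤ 1)
    (h : EuclideanSpace ℝ (Fin d)) (hh : Sparse s h)
    (et : EuclideanSpace ℝ (Fin m)) (het : et = y - Mv A h)
    (a : EuclideanSpace ℝ (Fin d)) (ℓ : EuclideanSpace ℝ (Fin d))
    (hℓ : ℓ = a - η • ((-2 : ℝ) • Mv Aᵀ (y - Mv A a)))
    (Ω : Finset (Fin d)) (hΩ : Ω.card = s)
    (x' : EuclideanSpace ℝ (Fin d))
    (hmin : ∀ Ω' : Finset (Fin d), Ω'.card = s → ‖x' - ℓ‖ ≤ ‖proj Ω' a - ℓ‖) :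
    ‖x' - h‖ ≤ (2 + 2 * η) * ‖a - h‖ + 6 * η * ‖et‖ := by
  let T := (toEuclideanLin A).toContinuousLinearMap
  have hT : ‖T‖ ≤ 1 := hA.le
  have hgrad : ℓ = gradientStep T y (2 * η) a := by
    have hℓ' : ℓ = a + (2 * η) • Mv Aᵀ (y - Mv A a) := by rw [hℓ]; module
    rwa [Mv_transpose_eq_adjoint] at hℓ'
  have hsd : s ≤ d := hΩ ▸ (Finset.card_le_univ Ω).trans_eq (Fintype.card_fin d)
  obtain ⟨S, hS, hproj⟩ := hh.exists_proj_sub_le hsd a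
  have het' : et = y - T h := het
  have hstep : ‖ℓ - a‖ ≤ 2 * η * (‖a - h‖ + ‖et‖) := by
    rw [het', hgrad]; exact norm_gradientStep_sub_self_le hT (by positivity)
  have hstep' : ‖ℓ - h‖ ≤ ‖a - h‖ + 2 * η * ‖et‖ := by
    rw [het', hgrad]; exact norm_gradientStep_sub_le hT (by positivity) (by linarith)
  calc ‖x' - h‖ ≤ ‖x' - ℓ‖ + ‖ℓ - h‖ := norm_sub_le_norm_sub_add_norm_sub _ _ _
    _ ≤ ‖proj S a - a‖ + ‖ℓ - a‖ + ‖ℓ - h‖ := by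
        gcongr
        rw [norm_sub_rev ℓ a]
        exact (hmin S hS).trans (norm_sub_le_norm_sub_add_norm_sub _ _ _)
    _ ≤ ‖a - h‖ + 2 * η * (‖a - h‖ + ‖et‖) + (‖a - h‖ + 2 * η * ‖et‖) := by gcongr
    _ ≤ (2 + 2 * η) * ‖a - h‖ + 6 * η * ‖et‖ := by
        linarith [mul_nonneg hη0 (norm_nonneg et)]

theorem stmt9 {m d s : ℕ} (A : Matrix (Fin m) (Fin d) ℝ) (hA : opNorm A = 1)
    (xs : EuclideanSpace ℝ (Fin d)) (e : EuclideanSpace ℝ (Fin m))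
    (y : EuclideanSpace ℝ (Fin m)) (hy : y = Mv A xs + e)
    (η : ℝ) (hη0 : 0 ≤ η) (hη1 : η ≤ 1)
    (h : EuclideanSpace ℝ (Fin d)) (hh : Sparse s h)
    (hbest : ∀ w : EuclideanSpace ℝ (Fin d), Sparse s w → ‖xs - h‖ ≤ ‖xs - w‖)
    (et : EuclideanSpace ℝ (Fin m)) (het : et = y - Mv A h)
    (a : EuclideanSpace ℝ (Fin d)) (ℓ : EuclideanSpace ℝ (Fin d))
    (hℓ : ℓ = a - η • ((-2 : ℝ) • Mv Aᵀ (y - Mv A a)))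
    (Ω : Finset (Fin d)) (hΩ : Ω.card = s)
    (x' : EuclideanSpace ℝ (Fin d)) (hx' : x' = proj Ω a)
    (hmin : ∀ Ω' : Finset (Fin d), Ω'.card = s → ‖x' - ℓ‖ ≤ ‖proj Ω' a - ℓ‖) :
    ‖x' - h‖ ≤ (2 + 2 * η) * ‖a - h‖ + 6 * η * ‖et‖ :=
  stmt9_general A hA y η hη0 hη1 h hh et het a ℓ hℓ Ω hΩ x' hmin
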